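/- Suppose a finite weighted digraph (G,m) has a unique source F (respectively unique sink S) and let φ ∈ ker(L^+) (respectively ker(L^-)). Then φ is constant on F (resp. S) and the maximum of |φ| over V is attained on F (resp. S). -/

import Mathlib

open Finset

variable {V A : Type*}

/-- Reachability by a directed path (`u ⇝ v`). -/
def Reaches (tail head : A → V) : V → V → Prop :=
  Relation.ReflTransGen (fun u v => ∃ a, tail a = u ∧ head a = v)

/-- A source: the vertex set of an SCC with no arcs entering it from its complement. -/
def IsSourceF (tail head : A → V) (F : Finset V) : Prop :=
  F.Nonempty ∧ (∀ u ∈ F, ∀ v ∈ F, Reaches tail head u v) ∧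
    (∀ u ∈ F, ∀ v, Reaches tail head u v → Reaches tail head v u → v ∈ F) ∧
    (∀ a, head a ∈ F → tail a ∈ F)

/-- A sink: the vertex set of an SCC with no arcs leaving it into its complement. -/
def IsSinkF (tail head : A → V) (S : Finset V) : Prop :=
  S.Nonempty ∧ (∀ u ∈ S, ∀ v ∈ S, Reaches tail head u v) ∧
    (∀ u ∈ S, ∀ v, Reaches tail head u v → Reaches tail head v u → v ∈ S) ∧
    (∀ a, tail a ∈ S → head a ∈ S)

/-- The in Laplacian `L⁺ = (d⁺)* d` in its explicit form. -/
noncomputable def Lplus [Fintype A] [DecidableEq V] (tail head : A → V)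
    (mV : V → ℝ) (mA : A → ℝ) (φ : V → ℂ) (v : V) : ℂ :=
  (mV v : ℂ)⁻¹ * ∑ a ∈ univ.filter (fun a => head a = v), (φ v - φ (tail a)) * (mA a : ℂ)

/-- The out Laplacian `L⁻ = (d⁻)* d` in its explicit form. -/
noncomputable def Lminus [Fintype A] [DecidableEq V] (tail head : A → V)
    (mV : V → ℝ) (mA : A → ℝ) (φ : V → ℂ) (v : V) : ℂ :=
  (mV v : ℂ)⁻¹ * ∑ a ∈ univ.filter (fun a => tail a = v), (φ v - φ (head a)) * (mA a : ℂ)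

/-! The maximum principle: at a vertex where `|φ|` is maximal, `L⁺φ = 0` writes `φ v` as a
weighted average of the values at its in-neighbours, all of modulus at most `|φ v|`, and by
strict convexity of the Euclidean norm they all equal `φ v`. So `φ` is constant, with maximal
modulus, on the set of ancestors of a maximiser. Among these ancestors one with fewest ancestors
spans a source, which by uniqueness is `F`. The sink case is the source case for the reversed
graph. -/

section WeightedAverage

variable {ι E : Type*} [NormedAddCommGroup E] [InnerProductSpace ℝ E]

theorem eq_of_sum_smul_sub_eq_zero_of_norm_le {s : Finset ι} {w : ι → ℝ}
    (hw : ∀ i ∈ s, 0 < w i) {z : E} {x : ι → E} (hsum : ∑ i ∈ s, w i • (z - x i) = 0)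
    (hle : ∀ i ∈ s, ‖x i‖ ≤ ‖z‖) : ∀ i ∈ s, x i = z := by
  have hterm : ∀ i, ‖z - x i‖ ^ 2 = ‖x i‖ ^ 2 - ‖z‖ ^ 2 + 2 * inner ℝ z (z - x i) := by
    intro i
    rw [norm_sub_sq_real, inner_sub_right, real_inner_self_eq_norm_sq]
    ring
  have hnonneg : ∀ i ∈ s, 0 ≤ w i * ‖z - x i‖ ^ 2 := fun i hi => by
    have := (hw i hi).le
    positivity
  have hzero : ∑ i ∈ s, w i * ‖z - x i‖ ^ 2 = 0 := by
    refine le_antisymm ?_ (Finset.sum_nonneg hnonneg)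
    calc ∑ i ∈ s, w i * ‖z - x i‖ ^ 2
        = ∑ i ∈ s, w i * (‖x i‖ ^ 2 - ‖z‖ ^ 2)
            + 2 * inner ℝ z (∑ i ∈ s, w i • (z - x i)) := by
          simp only [hterm, inner_sum, real_inner_smul_right, Finset.mul_sum,
            ← Finset.sum_add_distrib]
          exact Finset.sum_congr rfl fun i _ => by ring
      _ ≤ 0 := by
          rw [hsum, inner_zero_right, mul_zero, add_zero]
          refine Finset.sum_nonpos fun i hi => mul_nonpos_of_nonneg_of_nonpos (hw i hi).le ?_
          exact sub_nonpos.mpr (pow_le_pow_left₀ (norm_nonneg _) (hle i hi) 2)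
  intro i hi
  have hi0 := (Finset.sum_eq_zero_iff_of_nonneg hnonneg).mp hzero i hi
  rw [mul_eq_zero, or_iff_right (hw i hi).ne', sq_eq_zero_iff, norm_sub_eq_zero_iff] at hi0
  exact hi0.symm

end WeightedAverage

section Digraph

variable (tail head : A → V)

theorem reaches_swap {u v : V} : Reaches head tail u v ↔ Reaches tail head v u := by
  rw [Reaches, Reaches, ← Relation.reflTransGen_swap]
  simp only [and_comm]

theorem isSinkF_iff_isSourceF_swap (S : Finset V) :
    IsSinkF tail head S ↔ IsSourceF head tail S := by
  simp only [IsSinkF, IsSourceF, reaches_swap]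
  constructor <;> rintro ⟨hne, hconn, hmax, hclosed⟩ <;>
    exact ⟨hne, fun u hu v hv => hconn v hv u hu, fun u hu v hvu huv => hmax u hu v huv hvu,
      hclosed⟩

theorem Lminus_eq_Lplus_swap [Fintype A] [DecidableEq V] (mV : V → ℝ) (mA : A → ℝ) :
    Lminus tail head mV mA = Lplus head tail mV mA :=
  rfl

def IsInitial (u : V) : Prop :=
  ∀ w, Reaches tail head w u → Reaches tail head u w

section Components

variable [Fintype V]

open Classical in
noncomputable def ancestors (v : V) : Finset V :=
  univ.filter (Reaches tail head · v)

theorem mem_ancestors {u v : V} : u ∈ ancestors tail head v ↔ Reaches tail head u v := by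
  simp [ancestors]

open Classical in
noncomputable def stronglyConnectedComponent (u : V) : Finset V :=
  univ.filter fun v => Reaches tail head u v ∧ Reaches tail head v u

theorem mem_stronglyConnectedComponent {u v : V} :
    v ∈ stronglyConnectedComponent tail head u ↔
      Reaches tail head u v ∧ Reaches tail head v u := by
  simp [stronglyConnectedComponent]

theorem exists_isInitial_reaches (v : V) :
    ∃ u, IsInitial tail head u ∧ Reaches tail head u v := by
  obtain ⟨u, hu, hmin⟩ := (ancestors tail head v).exists_min_image
    (fun u => (ancestors tail head u).card) ⟨v, (mem_ancestors tail head).mpr .refl⟩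
  rw [mem_ancestors] at hu
  refine ⟨u, fun w hwu => ?_, hu⟩
  have hsub : ancestors tail head w ⊆ ancestors tail head u := fun x hx => by
    rw [mem_ancestors] at hx ⊢
    exact hx.trans hwu
  have heq := Finset.eq_of_subset_of_card_le hsub
    (hmin w ((mem_ancestors tail head).mpr (hwu.trans hu)))
  exact (mem_ancestors tail head).mp (heq ▸ (mem_ancestors tail head).mpr .refl)

theorem isSourceF_stronglyConnectedComponent {u : V} (hu : IsInitial tail head u) :
    IsSourceF tail head (stronglyConnectedComponent tail head u) := by
  simp only [IsSourceF, mem_stronglyConnectedComponent]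
  refine ⟨⟨u, (mem_stronglyConnectedComponent tail head).mpr ⟨.refl, .refl⟩⟩,
    fun x hx y hy => hx.2.trans hy.1, fun x hx v hxv hvx => ⟨hx.1.trans hxv, hvx.trans hx.2⟩,
    fun a ha => ?_⟩
  have hau : Reaches tail head (tail a) u :=
    (Relation.ReflTransGen.single ⟨a, rfl, rfl⟩).trans ha.2
  exact ⟨hu _ hau, hau⟩

end Components

variable [Fintype A] [DecidableEq V] {mV : V → ℝ} {mA : A → ℝ} {φ : V → ℂ}

theorem eq_of_Lplus_eq_zero_of_head_eq (hmV : ∀ v, mV v ≠ 0) (hmA : ∀ a, 0 < mA a)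
    (hφ : Lplus tail head mV mA φ = 0) {v : V}
    (hle : ∀ a, head a = v → ‖φ (tail a)‖ ≤ ‖φ v‖) {a : A} (ha : head a = v) :
    φ (tail a) = φ v := by
  have hsum : ∑ b ∈ univ.filter (fun b => head b = v), mA b • (φ v - φ (tail b)) = 0 := by
    have h := congrFun hφ v
    simp only [Lplus, Pi.zero_apply, mul_eq_zero, inv_eq_zero, Complex.ofReal_eq_zero, hmV v,
      false_or] at h
    simpa only [Complex.real_smul, mul_comm] using h
  exact eq_of_sum_smul_sub_eq_zero_of_norm_le (fun b _ => hmA b) hsum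
    (fun b hb => hle b (mem_filter.mp hb).2) a (mem_filter.mpr ⟨mem_univ a, ha⟩)

theorem eq_of_Lplus_eq_zero_of_reaches (hmV : ∀ v, mV v ≠ 0) (hmA : ∀ a, 0 < mA a)
    (hφ : Lplus tail head mV mA φ = 0) {v : V} (hmax : ∀ w, ‖φ w‖ ≤ ‖φ v‖) {u : V}
    (huv : Reaches tail head u v) : φ u = φ v := by
  induction huv using Relation.ReflTransGen.head_induction_on with
  | refl => rfl
  | head huu' _ ih =>
    obtain ⟨a, rfl, rfl⟩ := huu'
    rw [← ih]
    exact eq_of_Lplus_eq_zero_of_head_eq tail head hmV hmA hφ (fun b _ => ih ▸ hmax _) rfl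

theorem exists_isSourceF_eq_const_of_Lplus_eq_zero [Fintype V] [Nonempty V]
    (hmV : ∀ v, mV v ≠ 0) (hmA : ∀ a, 0 < mA a) (hφ : Lplus tail head mV mA φ = 0) :
    ∃ F, IsSourceF tail head F ∧ ∃ c, (∀ w ∈ F, φ w = c) ∧ ∀ v, ‖φ v‖ ≤ ‖c‖ := by
  obtain ⟨v, hmax⟩ := Finite.exists_max fun v => ‖φ v‖
  obtain ⟨u, hu, huv⟩ := exists_isInitial_reaches tail head v
  refine ⟨_, isSourceF_stronglyConnectedComponent tail head hu, φ v, fun w hw => ?_, hmax⟩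
  exact eq_of_Lplus_eq_zero_of_reaches tail head hmV hmA hφ hmax
    (((mem_stronglyConnectedComponent tail head).mp hw).2.trans huv)

theorem const_and_max_on_unique_source_of_Lplus_eq_zero [Fintype V]
    (hmV : ∀ v, mV v ≠ 0) (hmA : ∀ a, 0 < mA a) {F : Finset V} (hF : IsSourceF tail head F)
    (huniq : ∀ F', IsSourceF tail head F' → F' = F) (hφ : Lplus tail head mV mA φ = 0) :
    (∀ u ∈ F, ∀ v ∈ F, φ u = φ v) ∧ ∃ u ∈ F, ∀ v, ‖φ v‖ ≤ ‖φ u‖ := by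
  obtain ⟨u, hu⟩ := hF.1
  have : Nonempty V := ⟨u⟩
  obtain ⟨F', hF', c, hc, hmax⟩ :=
    exists_isSourceF_eq_const_of_Lplus_eq_zero tail head hmV hmA hφ
  obtain rfl := huniq F' hF'
  exact ⟨fun v hv w hw => (hc v hv).trans (hc w hw).symm, u, hu, fun v => hc u hu ▸ hmax v⟩

end Digraph

/-- If `(G,m)` has a unique source `F` (resp. unique sink `S`) and `φ ∈ ker L⁺`
(resp. `φ ∈ ker L⁻`), then `φ` is constant on `F` (resp. `S`) and `max |φ|` is attained
on `F` (resp. `S`). -/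
theorem stmt_14 [Fintype V] [Fintype A] [DecidableEq V]
    (tail head : A → V) (mV : V → ℝ) (mA : A → ℝ)
    (hmV : ∀ v, 0 < mV v) (hmA : ∀ a, 0 < mA a) :
    (∀ F : Finset V, IsSourceF tail head F → (∀ F', IsSourceF tail head F' → F' = F) →
      ∀ φ : V → ℂ, Lplus tail head mV mA φ = 0 →
        (∀ u ∈ F, ∀ v ∈ F, φ u = φ v) ∧
        ∃ u ∈ F, ∀ v, ‖φ v‖ ≤ ‖φ u‖) ∧
    (∀ S : Finset V, IsSinkF tail head S → (∀ S', IsSinkF tail head S' → S' = S) →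
      ∀ φ : V → ℂ, Lminus tail head mV mA φ = 0 →
        (∀ u ∈ S, ∀ v ∈ S, φ u = φ v) ∧
        ∃ u ∈ S, ∀ v, ‖φ v‖ ≤ ‖φ u‖) := by
  have hmV' : ∀ v, mV v ≠ 0 := fun v => (hmV v).ne'
  refine ⟨fun F hF huniq φ hφ =>
    const_and_max_on_unique_source_of_Lplus_eq_zero tail head hmV' hmA hF huniq hφ,
    fun S hS huniq φ hφ => ?_⟩
  rw [isSinkF_iff_isSourceF_swap] at hS
  rw [Lminus_eq_Lplus_swap] at hφ
  exact const_and_max_on_unique_source_of_Lplus_eq_zero head tail hmV' hmA hS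
    (fun S' hS' => huniq S' ((isSinkF_iff_isSourceF_swap tail head S').mpr hS')) hφ
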